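/- arXiv:2105.14228 — 5 statements merged into one kernel-verified Lean document; each statement's English description precedes it below -/
import Mathlib

section
/- Every M♮-concave set function f satisfies the local exchange property (L3): for any Z ⊆ N and distinct i, j, k, l ∈ N \ Z, f(Z+i+j) + f(Z+k+l) ≤ max( f(Z+i+k) + f(Z+j+l), f(Z+j+k) + f(Z+i+l) ). -/
/-- M♮-concavity of a set function with values in ℝ ∪ {-∞}. -/
def MnatConcave {α : Type*} [DecidableEq α] (f : Finset α → WithBot ℝ) : Prop :=
  ∀ X Y : Finset α, ∀ i ∈ X \ Y,
    f X + f Y ≤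
      max (f (X.erase i) + f (insert i Y))
        ((Y \ X).sup fun j => f (insert j (X.erase i)) + f ((insert i Y).erase j))

lemma core (g : Finset (Fin 4) → WithBot ℝ) (hg : MnatConcave g) :
    g {0,1} + g {2,3} ≤ max (g {0,2} + g {1,3}) (g {1,2} + g {0,3}) := by
  by_contra hcon
  push_neg at hcon
  have hG1 : g {0,2} + g {1,3} < g {0,1} + g {2,3} := lt_of_le_of_lt (le_max_left _ _) hcon
  have hG2 : g {1,2} + g {0,3} < g {0,1} + g {2,3} := lt_of_le_of_lt (le_max_right _ _) hcon
  have I1 := hg {0,1} {2,3} 0 (by decide)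
  simp only [show ({0,1}:Finset (Fin 4)).erase 0 = {1} by decide,
    show insert (0:Fin 4) ({2,3}:Finset (Fin 4)) = {0,2,3} by decide,
    show ({2,3}:Finset (Fin 4)) \ {0,1} = {2,3} by decide,
    show insert (2:Fin 4) ({1}:Finset (Fin 4)) = {1,2} by decide,
    show ({0,2,3}:Finset (Fin 4)).erase 2 = {0,3} by decide,
    show insert (3:Fin 4) ({1}:Finset (Fin 4)) = {1,3} by decide,
    show ({0,2,3}:Finset (Fin 4)).erase 3 = {0,2} by decide,
    Finset.sup_insert, Finset.sup_singleton, Finset.sup_empty] at I1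
  have I2 := hg {0,1} {2,3} 1 (by decide)
  simp only [show ({0,1}:Finset (Fin 4)).erase 1 = {0} by decide,
    show insert (1:Fin 4) ({2,3}:Finset (Fin 4)) = {1,2,3} by decide,
    show ({2,3}:Finset (Fin 4)) \ {0,1} = {2,3} by decide,
    show insert (2:Fin 4) ({0}:Finset (Fin 4)) = {0,2} by decide,
    show ({1,2,3}:Finset (Fin 4)).erase 2 = {1,3} by decide,
    show insert (3:Fin 4) ({0}:Finset (Fin 4)) = {0,3} by decide,
    show ({1,2,3}:Finset (Fin 4)).erase 3 = {1,2} by decide,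
    Finset.sup_insert, Finset.sup_singleton, Finset.sup_empty] at I2
  have I3 := hg {2,3} {0,1} 2 (by decide)
  simp only [show ({2,3}:Finset (Fin 4)).erase 2 = {3} by decide,
    show insert (2:Fin 4) ({0,1}:Finset (Fin 4)) = {0,1,2} by decide,
    show ({0,1}:Finset (Fin 4)) \ {2,3} = {0,1} by decide,
    show insert (0:Fin 4) ({3}:Finset (Fin 4)) = {0,3} by decide,
    show ({0,1,2}:Finset (Fin 4)).erase 0 = {1,2} by decide,
    show insert (1:Fin 4) ({3}:Finset (Fin 4)) = {1,3} by decide,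
    show ({0,1,2}:Finset (Fin 4)).erase 1 = {0,2} by decide,
    Finset.sup_insert, Finset.sup_singleton, Finset.sup_empty] at I3
  have I4 := hg {2,3} {0,1} 3 (by decide)
  simp only [show ({2,3}:Finset (Fin 4)).erase 3 = {2} by decide,
    show insert (3:Fin 4) ({0,1}:Finset (Fin 4)) = {0,1,3} by decide,
    show ({0,1}:Finset (Fin 4)) \ {2,3} = {0,1} by decide,
    show insert (0:Fin 4) ({2}:Finset (Fin 4)) = {0,2} by decide,
    show ({0,1,3}:Finset (Fin 4)).erase 0 = {1,3} by decide,
    show insert (1:Fin 4) ({2}:Finset (Fin 4)) = {1,2} by decide,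
    show ({0,1,3}:Finset (Fin 4)).erase 1 = {0,3} by decide,
    Finset.sup_insert, Finset.sup_singleton, Finset.sup_empty] at I4
  have C1 := hg {0,1} {2} 1 (by decide)
  simp only [show ({0,1}:Finset (Fin 4)).erase 1 = {0} by decide,
    show insert (1:Fin 4) ({2}:Finset (Fin 4)) = {1,2} by decide,
    show ({2}:Finset (Fin 4)) \ {0,1} = {2} by decide,
    show insert (2:Fin 4) ({0}:Finset (Fin 4)) = {0,2} by decide,
    show ({1,2}:Finset (Fin 4)).erase 2 = {1} by decide,
    Finset.sup_insert, Finset.sup_singleton, Finset.sup_empty] at C1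
  have C2 := hg {0,1} {3} 1 (by decide)
  simp only [show ({0,1}:Finset (Fin 4)).erase 1 = {0} by decide,
    show insert (1:Fin 4) ({3}:Finset (Fin 4)) = {1,3} by decide,
    show ({3}:Finset (Fin 4)) \ {0,1} = {3} by decide,
    show insert (3:Fin 4) ({0}:Finset (Fin 4)) = {0,3} by decide,
    show ({1,3}:Finset (Fin 4)).erase 3 = {1} by decide,
    Finset.sup_insert, Finset.sup_singleton, Finset.sup_empty] at C2
  have U1 := hg {0,1,2} {0} 1 (by decide)
  simp only [show ({0,1,2}:Finset (Fin 4)).erase 1 = {0,2} by decide,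
    show insert (1:Fin 4) ({0}:Finset (Fin 4)) = {0,1} by decide,
    show ({0}:Finset (Fin 4)) \ {0,1,2} = {} by decide,
    Finset.sup_insert, Finset.sup_singleton, Finset.sup_empty,
    show ∀ t : WithBot ℝ, max t ⊥ = t from fun t => max_eq_left bot_le] at U1
  have U2 := hg {0,1,2} {1} 0 (by decide)
  simp only [show ({0,1,2}:Finset (Fin 4)).erase 0 = {1,2} by decide,
    show insert (0:Fin 4) ({1}:Finset (Fin 4)) = {0,1} by decide,
    show ({1}:Finset (Fin 4)) \ {0,1,2} = {} by decide,
    Finset.sup_insert, Finset.sup_singleton, Finset.sup_empty,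
    show ∀ t : WithBot ℝ, max t ⊥ = t from fun t => max_eq_left bot_le] at U2
  have U3 := hg {0,1,2} {2} 0 (by decide)
  simp only [show ({0,1,2}:Finset (Fin 4)).erase 0 = {1,2} by decide,
    show insert (0:Fin 4) ({2}:Finset (Fin 4)) = {0,2} by decide,
    show ({2}:Finset (Fin 4)) \ {0,1,2} = {} by decide,
    Finset.sup_insert, Finset.sup_singleton, Finset.sup_empty,
    show ∀ t : WithBot ℝ, max t ⊥ = t from fun t => max_eq_left bot_le] at U3
  have U4 := hg {0,1,3} {0} 1 (by decide)
  simp only [show ({0,1,3}:Finset (Fin 4)).erase 1 = {0,3} by decide,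
    show insert (1:Fin 4) ({0}:Finset (Fin 4)) = {0,1} by decide,
    show ({0}:Finset (Fin 4)) \ {0,1,3} = {} by decide,
    Finset.sup_insert, Finset.sup_singleton, Finset.sup_empty,
    show ∀ t : WithBot ℝ, max t ⊥ = t from fun t => max_eq_left bot_le] at U4
  have U5 := hg {0,1,3} {1} 0 (by decide)
  simp only [show ({0,1,3}:Finset (Fin 4)).erase 0 = {1,3} by decide,
    show insert (0:Fin 4) ({1}:Finset (Fin 4)) = {0,1} by decide,
    show ({1}:Finset (Fin 4)) \ {0,1,3} = {} by decide,
    Finset.sup_insert, Finset.sup_singleton, Finset.sup_empty,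
    show ∀ t : WithBot ℝ, max t ⊥ = t from fun t => max_eq_left bot_le] at U5
  have U6 := hg {0,1,3} {3} 0 (by decide)
  simp only [show ({0,1,3}:Finset (Fin 4)).erase 0 = {1,3} by decide,
    show insert (0:Fin 4) ({3}:Finset (Fin 4)) = {0,3} by decide,
    show ({3}:Finset (Fin 4)) \ {0,1,3} = {} by decide,
    Finset.sup_insert, Finset.sup_singleton, Finset.sup_empty,
    show ∀ t : WithBot ℝ, max t ⊥ = t from fun t => max_eq_left bot_le] at U6
  have U7 := hg {0,2,3} {0} 2 (by decide)
  simp only [show ({0,2,3}:Finset (Fin 4)).erase 2 = {0,3} by decide,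
    show insert (2:Fin 4) ({0}:Finset (Fin 4)) = {0,2} by decide,
    show ({0}:Finset (Fin 4)) \ {0,2,3} = {} by decide,
    Finset.sup_insert, Finset.sup_singleton, Finset.sup_empty,
    show ∀ t : WithBot ℝ, max t ⊥ = t from fun t => max_eq_left bot_le] at U7
  have U8 := hg {0,2,3} {2} 0 (by decide)
  simp only [show ({0,2,3}:Finset (Fin 4)).erase 0 = {2,3} by decide,
    show insert (0:Fin 4) ({2}:Finset (Fin 4)) = {0,2} by decide,
    show ({2}:Finset (Fin 4)) \ {0,2,3} = {} by decide,
    Finset.sup_insert, Finset.sup_singleton, Finset.sup_empty,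
    show ∀ t : WithBot ℝ, max t ⊥ = t from fun t => max_eq_left bot_le] at U8
  have U9 := hg {0,2,3} {3} 0 (by decide)
  simp only [show ({0,2,3}:Finset (Fin 4)).erase 0 = {2,3} by decide,
    show insert (0:Fin 4) ({3}:Finset (Fin 4)) = {0,3} by decide,
    show ({3}:Finset (Fin 4)) \ {0,2,3} = {} by decide,
    Finset.sup_insert, Finset.sup_singleton, Finset.sup_empty,
    show ∀ t : WithBot ℝ, max t ⊥ = t from fun t => max_eq_left bot_le] at U9
  have U10 := hg {1,2,3} {1} 2 (by decide)
  simp only [show ({1,2,3}:Finset (Fin 4)).erase 2 = {1,3} by decide,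
    show insert (2:Fin 4) ({1}:Finset (Fin 4)) = {1,2} by decide,
    show ({1}:Finset (Fin 4)) \ {1,2,3} = {} by decide,
    Finset.sup_insert, Finset.sup_singleton, Finset.sup_empty,
    show ∀ t : WithBot ℝ, max t ⊥ = t from fun t => max_eq_left bot_le] at U10
  have U11 := hg {1,2,3} {2} 1 (by decide)
  simp only [show ({1,2,3}:Finset (Fin 4)).erase 1 = {2,3} by decide,
    show insert (1:Fin 4) ({2}:Finset (Fin 4)) = {1,2} by decide,
    show ({2}:Finset (Fin 4)) \ {1,2,3} = {} by decide,
    Finset.sup_insert, Finset.sup_singleton, Finset.sup_empty,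
    show ∀ t : WithBot ℝ, max t ⊥ = t from fun t => max_eq_left bot_le] at U11
  have U12 := hg {1,2,3} {3} 1 (by decide)
  simp only [show ({1,2,3}:Finset (Fin 4)).erase 1 = {2,3} by decide,
    show insert (1:Fin 4) ({3}:Finset (Fin 4)) = {1,3} by decide,
    show ({3}:Finset (Fin 4)) \ {1,2,3} = {} by decide,
    Finset.sup_insert, Finset.sup_singleton, Finset.sup_empty,
    show ∀ t : WithBot ℝ, max t ⊥ = t from fun t => max_eq_left bot_le] at U12
  rw [add_comm (g {2,3}) (g {0,1})] at I3 I4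
  have hG1' : g {1,3} + g {0,2} < g {0,1} + g {2,3} := by rwa [add_comm] at hG1
  have hG2' : g {0,3} + g {1,2} < g {0,1} + g {2,3} := by rwa [add_comm] at hG2
  have hA : g {0,1} + g {2,3} ≤ g {1} + g {0,2,3} := by
    rcases le_max_iff.mp I1 with h | h
    · exact h
    rcases le_max_iff.mp h with h' | h'
    · exact absurd hG2 (not_lt.mpr h')
    · exact absurd hG1' (not_lt.mpr h')
  have hB : g {0,1} + g {2,3} ≤ g {0} + g {1,2,3} := by
    rcases le_max_iff.mp I2 with h | h
    · exact h
    rcases le_max_iff.mp h with h' | h'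
    · exact absurd hG1 (not_lt.mpr h')
    · exact absurd hG2' (not_lt.mpr h')
  have hC : g {0,1} + g {2,3} ≤ g {3} + g {0,1,2} := by
    rcases le_max_iff.mp I3 with h | h
    · exact h
    rcases le_max_iff.mp h with h' | h'
    · exact absurd hG2' (not_lt.mpr h')
    · exact absurd hG1' (not_lt.mpr h')
  have hD : g {0,1} + g {2,3} ≤ g {2} + g {0,1,3} := by
    rcases le_max_iff.mp I4 with h | h
    · exact h
    rcases le_max_iff.mp h with h' | h'
    · exact absurd hG1 (not_lt.mpr h')
    · exact absurd hG2 (not_lt.mpr h')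
  have ha : g {0,1} + g {2,3} ≠ ⊥ := fun hb => not_lt_bot (hb ▸ hcon)
  have h01 : g {0,1} ≠ ⊥ := (WithBot.add_ne_bot.mp ha).1
  have h23 : g {2,3} ≠ ⊥ := (WithBot.add_ne_bot.mp ha).2
  have hAne : g {1} + g {0,2,3} ≠ ⊥ := fun hb => ha (le_bot_iff.mp (hb ▸ hA))
  have h1 : g {1} ≠ ⊥ := (WithBot.add_ne_bot.mp hAne).1
  have h023 : g {0,2,3} ≠ ⊥ := (WithBot.add_ne_bot.mp hAne).2
  have hBne : g {0} + g {1,2,3} ≠ ⊥ := fun hb => ha (le_bot_iff.mp (hb ▸ hB))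
  have h0 : g {0} ≠ ⊥ := (WithBot.add_ne_bot.mp hBne).1
  have h123 : g {1,2,3} ≠ ⊥ := (WithBot.add_ne_bot.mp hBne).2
  have hCne : g {3} + g {0,1,2} ≠ ⊥ := fun hb => ha (le_bot_iff.mp (hb ▸ hC))
  have h3 : g {3} ≠ ⊥ := (WithBot.add_ne_bot.mp hCne).1
  have h012 : g {0,1,2} ≠ ⊥ := (WithBot.add_ne_bot.mp hCne).2
  have hDne : g {2} + g {0,1,3} ≠ ⊥ := fun hb => ha (le_bot_iff.mp (hb ▸ hD))
  have h2 : g {2} ≠ ⊥ := (WithBot.add_ne_bot.mp hDne).1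
  have h013 : g {0,1,3} ≠ ⊥ := (WithBot.add_ne_bot.mp hDne).2
  have hU1ne : g {0,2} + g {0,1} ≠ ⊥ := fun hb => (WithBot.add_ne_bot.mpr ⟨h012, h0⟩) (le_bot_iff.mp (hb ▸ U1))
  have h02 : g {0,2} ≠ ⊥ := (WithBot.add_ne_bot.mp hU1ne).1
  have h01x : g {0,1} ≠ ⊥ := (WithBot.add_ne_bot.mp hU1ne).2
  have hU6ne : g {1,3} + g {0,3} ≠ ⊥ := fun hb => (WithBot.add_ne_bot.mpr ⟨h013, h3⟩) (le_bot_iff.mp (hb ▸ U6))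
  have h13 : g {1,3} ≠ ⊥ := (WithBot.add_ne_bot.mp hU6ne).1
  have h03 : g {0,3} ≠ ⊥ := (WithBot.add_ne_bot.mp hU6ne).2
  have hU11ne : g {2,3} + g {1,2} ≠ ⊥ := fun hb => (WithBot.add_ne_bot.mpr ⟨h123, h2⟩) (le_bot_iff.mp (hb ▸ U11))
  have h23x : g {2,3} ≠ ⊥ := (WithBot.add_ne_bot.mp hU11ne).1
  have h12 : g {1,2} ≠ ⊥ := (WithBot.add_ne_bot.mp hU11ne).2
  obtain ⟨r0, er0⟩ := WithBot.ne_bot_iff_exists.mp h0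
  obtain ⟨r1, er1⟩ := WithBot.ne_bot_iff_exists.mp h1
  obtain ⟨r2, er2⟩ := WithBot.ne_bot_iff_exists.mp h2
  obtain ⟨r3, er3⟩ := WithBot.ne_bot_iff_exists.mp h3
  obtain ⟨r01, er01⟩ := WithBot.ne_bot_iff_exists.mp h01
  obtain ⟨r02, er02⟩ := WithBot.ne_bot_iff_exists.mp h02
  obtain ⟨r03, er03⟩ := WithBot.ne_bot_iff_exists.mp h03
  obtain ⟨r12, er12⟩ := WithBot.ne_bot_iff_exists.mp h12
  obtain ⟨r13, er13⟩ := WithBot.ne_bot_iff_exists.mp h13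
  obtain ⟨r23, er23⟩ := WithBot.ne_bot_iff_exists.mp h23
  obtain ⟨r012, er012⟩ := WithBot.ne_bot_iff_exists.mp h012
  obtain ⟨r013, er013⟩ := WithBot.ne_bot_iff_exists.mp h013
  obtain ⟨r023, er023⟩ := WithBot.ne_bot_iff_exists.mp h023
  obtain ⟨r123, er123⟩ := WithBot.ne_bot_iff_exists.mp h123
  simp only [← er0, ← er1, ← er2, ← er3, ← er01, ← er02, ← er03, ← er12, ← er13, ← er23, ← er012, ← er013, ← er023, ← er123, ← WithBot.coe_add, WithBot.coe_le_coe, WithBot.coe_lt_coe] at hG1 hG2 hA hB hC hD C1 C2 U1 U2 U3 U4 U5 U6 U7 U8 U9 U10 U11 U12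
  rcases le_max_iff.mp C1 with c1 | c1 <;> rcases le_max_iff.mp C2 with c2 | c2 <;>
    rw [WithBot.coe_le_coe] at c1 c2 <;> linarith


theorem stmt_4 {α : Type*} [Fintype α] [DecidableEq α] (f : Finset α → WithBot ℝ)
    (hf : MnatConcave f) :
    ∀ Z : Finset α, ∀ i j k l : α, i ∉ Z → j ∉ Z → k ∉ Z → l ∉ Z →
      i ≠ j → i ≠ k → i ≠ l → j ≠ k → j ≠ l → k ≠ l →
      f (insert i (insert j Z)) + f (insert k (insert l Z)) ≤
        max (f (insert i (insert k Z)) + f (insert j (insert l Z)))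
          (f (insert j (insert k Z)) + f (insert i (insert l Z))) := by
  intro Z i j k l hi hj hk hl hij hik hil hjk hjl hkl
  set φ : Fin 4 → α := ![i, j, k, l] with hφdef
  have hp0 : φ 0 = i := rfl
  have hp1 : φ 1 = j := rfl
  have hp2 : φ 2 = k := rfl
  have hp3 : φ 3 = l := rfl
  have hφZ : ∀ a : Fin 4, φ a ∉ Z := by
    intro a; fin_cases a
    · exact hi
    · exact hj
    · exact hk
    · exact hl
  have hinj : Function.Injective φ := by
    intro a b hab
    fin_cases a <;> fin_cases b <;>
      first
        | rfl
        | exact absurd hab hij | exact absurd hab hik | exact absurd hab hil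
        | exact absurd hab hjk | exact absurd hab hjl | exact absurd hab hkl
        | exact absurd hab hij.symm | exact absurd hab hik.symm | exact absurd hab hil.symm
        | exact absurd hab hjk.symm | exact absurd hab hjl.symm | exact absurd hab hkl.symm
  have lem1 : ∀ (W : Finset (Fin 4)) (b : Fin 4),
      (Z ∪ W.image φ).erase (φ b) = Z ∪ (W.erase b).image φ := by
    intro W b
    rw [Finset.erase_union_distrib, Finset.erase_eq_of_notMem (hφZ b),
      Finset.image_erase hinj]
  have lem2 : ∀ (W : Finset (Fin 4)) (b : Fin 4),
      insert (φ b) (Z ∪ W.image φ) = Z ∪ (insert b W).image φ := by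
    intro W b
    rw [Finset.image_insert, Finset.union_insert]
  have hg : MnatConcave (fun S : Finset (Fin 4) => f (Z ∪ S.image φ)) := by
    intro X Y a haXY
    obtain ⟨haX, haY⟩ := Finset.mem_sdiff.mp haXY
    have hmem : φ a ∈ (Z ∪ X.image φ) \ (Z ∪ Y.image φ) := by
      rw [Finset.mem_sdiff]
      constructor
      · exact Finset.mem_union_right _ (Finset.mem_image_of_mem φ haX)
      · rw [Finset.mem_union]
        rintro (h | h)
        · exact hφZ a h
        · obtain ⟨b, hb, hba⟩ := Finset.mem_image.mp h
          exact haY (hinj hba ▸ hb)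
    have H := hf (Z ∪ X.image φ) (Z ∪ Y.image φ) (φ a) hmem
    have eC : (Z ∪ Y.image φ) \ (Z ∪ X.image φ) = (Y \ X).image φ := by
      ext x
      simp only [Finset.mem_sdiff, Finset.mem_union, Finset.mem_image]
      constructor
      · rintro ⟨hx1 | ⟨b, hb, rfl⟩, hx2⟩
        · exact absurd (Or.inl hx1) hx2
        · exact ⟨b, ⟨hb, fun hbX => hx2 (Or.inr ⟨b, hbX, rfl⟩)⟩, rfl⟩
      · rintro ⟨b, ⟨hbY, hbX⟩, rfl⟩
        refine ⟨Or.inr ⟨b, hbY, rfl⟩, ?_⟩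
        rintro (h | ⟨c, hc, hcb⟩)
        · exact hφZ b h
        · exact hbX (hinj hcb ▸ hc)
    rw [lem1 X a, lem2 Y a, eC, Finset.sup_image] at H
    try simp only [Function.comp] at H
    try simp only [Function.comp_def] at H
    have hsup : ((Y \ X).sup fun b =>
          f (insert (φ b) (Z ∪ (X.erase a).image φ)) + f ((Z ∪ ((insert a Y).image φ)).erase (φ b)))
        = (Y \ X).sup (fun b => f (Z ∪ (insert b (X.erase a)).image φ) +
            f (Z ∪ ((insert a Y).erase b).image φ)) :=
      Finset.sup_congr rfl (fun b _ => by rw [lem2 (X.erase a) b, lem1 (insert a Y) b])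
    rw [hsup] at H
    exact H
  have key := core (fun S : Finset (Fin 4) => f (Z ∪ S.image φ)) hg
  have E : ∀ (a b : Fin 4), Z ∪ ({a, b} : Finset (Fin 4)).image φ = insert (φ a) (insert (φ b) Z) := by
    intro a b
    ext x
    simp only [Finset.mem_union, Finset.mem_image, Finset.mem_insert, Finset.mem_singleton]
    constructor
    · rintro (hx | ⟨c, (rfl | rfl), rfl⟩)
      · exact Or.inr (Or.inr hx)
      · exact Or.inl rfl
      · exact Or.inr (Or.inl rfl)
    · rintro (rfl | rfl | hx)
      · exact Or.inr ⟨a, Or.inl rfl, rfl⟩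
      · exact Or.inr ⟨b, Or.inr rfl, rfl⟩
      · exact Or.inl hx
  simp only [E] at key
  simpa only [hp0, hp1, hp2, hp3] using key
end

section
/- If a set family F ⊆ 2^N satisfies the M♮-exchange axiom, then for any X, Y ∈ F with |X| < |Y|, there exists j ∈ Y \ X such that Y \ {j} ∈ F. -/
/-- The exchange axiom for an M♮-convex family (g-matroid). -/
def MnatFamily {α : Type*} [DecidableEq α] (F : Set (Finset α)) : Prop :=
  ∀ X ∈ F, ∀ Y ∈ F, ∀ i ∈ X \ Y,
    (X.erase i ∈ F ∧ insert i Y ∈ F) ∨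
    ∃ j ∈ Y \ X, insert j (X.erase i) ∈ F ∧ (insert i Y).erase j ∈ F

theorem stmt_7 {α : Type*} [Fintype α] [DecidableEq α] (F : Set (Finset α))
    (hF : MnatFamily F) :
    ∀ X ∈ F, ∀ Y ∈ F, X.card < Y.card → ∃ j ∈ Y \ X, Y.erase j ∈ F := by
  intro X hX Y hY hlt
  have key : ∀ n (X : Finset α), X ∈ F → (X \ Y).card ≤ n → X.card < Y.card →
      ∃ j ∈ Y \ X, Y.erase j ∈ F := by
    intro n
    induction n with
    | zero =>
      intro X hX hc hlt
      have hXY : X ⊆ Y := by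
        rw [Nat.le_zero, Finset.card_eq_zero, Finset.sdiff_eq_empty_iff_subset] at hc
        exact hc
      obtain ⟨i, hi⟩ := Finset.sdiff_nonempty.mpr
        (fun h => absurd (Finset.card_le_card h) (not_le.mpr hlt))
      rcases hF Y hY X hX i hi with ⟨h1, _⟩ | ⟨j, hj, _⟩
      · exact ⟨i, hi, h1⟩
      · have := Finset.mem_sdiff.mp hj
        exact absurd (hXY this.1) this.2
    | succ n ih =>
      intro X hX hc hlt
      rcases eq_or_ne (X \ Y) ∅ with hempty | hne
      · exact ih X hX (by simp [hempty]) hlt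
      obtain ⟨i, hi⟩ := Finset.nonempty_iff_ne_empty.mpr hne
      have hiX : i ∈ X := (Finset.mem_sdiff.mp hi).1
      have hiY : i ∉ Y := (Finset.mem_sdiff.mp hi).2
      have hcard_erase : ((X.erase i) \ Y).card ≤ n := by
        have : (X.erase i) \ Y = (X \ Y).erase i := Finset.erase_sdiff_comm X Y i
        rw [this, Finset.card_erase_of_mem hi]
        omega
      rcases hF X hX Y hY i hi with ⟨h1, _⟩ | ⟨j, hj, h1, _⟩
      · obtain ⟨k, hk, hke⟩ := ih (X.erase i) h1 hcard_erase
          (lt_trans (Finset.card_erase_lt_of_mem hiX) hlt)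
        have hkY : k ∈ Y := (Finset.mem_sdiff.mp hk).1
        have hkX : k ∉ X.erase i := (Finset.mem_sdiff.mp hk).2
        refine ⟨k, Finset.mem_sdiff.mpr ⟨hkY, fun hkX' => hkX ?_⟩, hke⟩
        exact Finset.mem_erase.mpr ⟨fun h => hiY (h ▸ hkY), hkX'⟩
      · have hjY : j ∈ Y := (Finset.mem_sdiff.mp hj).1
        have hjX : j ∉ X := (Finset.mem_sdiff.mp hj).2
        have hcard' : ((insert j (X.erase i)) \ Y).card ≤ n := by
          have : (insert j (X.erase i)) \ Y = (X.erase i) \ Y := by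
            rw [Finset.insert_sdiff_of_mem _ hjY]
          rw [this]; exact hcard_erase
        have hclt : (insert j (X.erase i)).card < Y.card := by
          have h1' : (insert j (X.erase i)).card ≤ (X.erase i).card + 1 :=
            Finset.card_insert_le _ _
          have h2' : (X.erase i).card = X.card - 1 := Finset.card_erase_of_mem hiX
          have h3' : 1 ≤ X.card := Finset.card_pos.mpr ⟨i, hiX⟩
          omega
        obtain ⟨k, hk, hke⟩ := ih (insert j (X.erase i)) h1 hcard' hclt
        have hkY : k ∈ Y := (Finset.mem_sdiff.mp hk).1
        have hkX : k ∉ insert j (X.erase i) := (Finset.mem_sdiff.mp hk).2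
        refine ⟨k, Finset.mem_sdiff.mpr ⟨hkY, fun hkX' => hkX ?_⟩, hke⟩
        have hki : k ≠ i := fun h => hiY (h ▸ hkY)
        exact Finset.mem_insert_of_mem (Finset.mem_erase.mpr ⟨hki, hkX'⟩)
  exact key _ X hX le_rfl hlt
end

section
/- If a set family F ⊆ 2^N has the property that for any X, Y ∈ F with X ⊊ Y there exists j ∈ Y \ X with X ∪ {j} ∈ F and Y \ {j} ∈ F, then F is closed under intermediate sets: whenever X, Y ∈ F and X ⊆ Z ⊆ Y, then Z ∈ F. -/
theorem stmt_10 {α : Type*} [Fintype α] [DecidableEq α] (F : Set (Finset α))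
    (h : ∀ X ∈ F, ∀ Y ∈ F, X ⊂ Y → ∃ j ∈ Y \ X, insert j X ∈ F ∧ Y.erase j ∈ F) :
    ∀ X ∈ F, ∀ Y ∈ F, ∀ Z : Finset α, X ⊆ Z → Z ⊆ Y → Z ∈ F := by
  have aux : ∀ n : ℕ, ∀ X ∈ F, ∀ Y ∈ F, (Y \ X).card ≤ n →
      ∀ Z : Finset α, X ⊆ Z → Z ⊆ Y → Z ∈ F := by
    intro n
    induction n with
    | zero =>
      intro X hX Y hY hc Z hXZ hZY
      have hYX : Y ⊆ X := by
        have : Y \ X = ∅ := Finset.card_eq_zero.mp (Nat.le_zero.mp hc)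
        intro a ha
        by_contra hax
        exact absurd (Finset.mem_sdiff.mpr ⟨ha, hax⟩) (by simp [this])
      have : Z = X := Finset.Subset.antisymm (hZY.trans hYX) hXZ
      rwa [this]
    | succ n ih =>
      intro X hX Y hY hc Z hXZ hZY
      by_cases hXY : X = Y
      · have : Z = X := Finset.Subset.antisymm (hZY.trans hXY.ge) hXZ
        rwa [this]
      · have hss : X ⊂ Y := (Finset.ssubset_iff_subset_ne).mpr ⟨hXZ.trans hZY, hXY⟩
        obtain ⟨j, hj, hins, hers⟩ := h X hX Y hY hss
        obtain ⟨hjY, hjX⟩ := Finset.mem_sdiff.mp hj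
        by_cases hjZ : j ∈ Z
        · have hcard : (Y \ insert j X).card ≤ n := by
            have : Y \ insert j X = (Y \ X).erase j := by
              ext a; simp [Finset.mem_sdiff, Finset.mem_erase, and_comm, or_comm]
              tauto
            rw [this, Finset.card_erase_of_mem hj]
            omega
          exact ih (insert j X) hins Y hY hcard Z (Finset.insert_subset hjZ hXZ) hZY
        · have hcard : (Y.erase j \ X).card ≤ n := by
            have : Y.erase j \ X = (Y \ X).erase j := by
              ext a; simp [Finset.mem_sdiff, Finset.mem_erase]; tauto
            rw [this, Finset.card_erase_of_mem hj]
            omega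
          exact ih X hX (Y.erase j) hers hcard Z hXZ
            (fun a ha => Finset.mem_erase.mpr ⟨fun e => hjZ (e ▸ ha), hZY ha⟩)
  intro X hX Y hY Z hXZ hZY
  exact aux (Y \ X).card X hX Y hY le_rfl Z hXZ hZY
end

section
/- Let f : 2^N → ℝ ∪ {-∞} be a set function satisfying: ∅ ∈ dom f, and (P1): for any X, Y ⊆ N with |X| < |Y|, f(X) + f(Y) ≤ max_{j ∈ Y\X} { f(X ∪ {j}) + f(Y \ {j}) }. Then dom f satisfies the independent-set axioms of a matroid: ∅ ∈ dom f; if X ⊆ Y ∈ dom f then X ∈ dom f; and if X, Y ∈ dom f with |X| < |Y| then X ∪ {j} ∈ dom f for some j ∈ Y \ X. -/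
theorem stmt_11 {α : Type*} [Fintype α] [DecidableEq α] (f : Finset α → WithBot ℝ)
    (h0 : f ∅ ≠ ⊥)
    (hP1 : ∀ X Y : Finset α, X.card < Y.card →
      f X + f Y ≤ (Y \ X).sup fun j => f (insert j X) + f (Y.erase j)) :
    f ∅ ≠ ⊥ ∧
    (∀ X Y : Finset α, X ⊆ Y → f Y ≠ ⊥ → f X ≠ ⊥) ∧
    (∀ X Y : Finset α, f X ≠ ⊥ → f Y ≠ ⊥ → X.card < Y.card →
      ∃ j ∈ Y \ X, f (insert j X) ≠ ⊥) := by
  classical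
  have exch : ∀ X Y : Finset α, f X ≠ ⊥ → f Y ≠ ⊥ → X.card < Y.card →
      ∃ j ∈ Y \ X, f (insert j X) ≠ ⊥ ∧ f (Y.erase j) ≠ ⊥ := by
    intro X Y hX hY hc
    have h := hP1 X Y hc
    have hne : f X + f Y ≠ ⊥ := by
      simp [WithBot.add_eq_bot, hX, hY]
    have hsup : (Y \ X).sup (fun j => f (insert j X) + f (Y.erase j)) ≠ ⊥ := by
      intro hb
      exact hne (le_bot_iff.mp (hb ▸ h))
    rw [Ne, Finset.sup_eq_bot_iff] at hsup
    push_neg at hsup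
    obtain ⟨j, hj, hjne⟩ := hsup
    rw [Ne, WithBot.add_eq_bot] at hjne
    push_neg at hjne
    exact ⟨j, hj, hjne.1, hjne.2⟩
  have her : ∀ n (Y : Finset α), Y.card = n → f Y ≠ ⊥ → ∀ X ⊆ Y, f X ≠ ⊥ := by
    intro n
    induction n using Nat.strong_induction_on with
    | _ n ih =>
      intro Y hYn hY X hXY
      rcases eq_or_lt_of_le (Finset.card_le_card hXY) with hcard | hcard
      · rwa [Finset.eq_of_subset_of_card_le hXY hcard.ge]
      · obtain ⟨A, hA, hAmax⟩ := Finset.exists_max_image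
          ((X.powerset).filter fun A => f A ≠ ⊥) Finset.card ⟨∅, by simp [h0]⟩
        simp only [Finset.mem_filter, Finset.mem_powerset] at hA
        have hAc : A.card < Y.card := lt_of_le_of_lt (Finset.card_le_card hA.1) hcard
        obtain ⟨k, hk, hki, hke⟩ := exch A Y hA.2 hY hAc
        rw [Finset.mem_sdiff] at hk
        have hkX : k ∉ X := by
          intro hkX
          have hmem : insert k A ∈ (X.powerset).filter fun A => f A ≠ ⊥ := by
            simp [Finset.mem_filter, Finset.mem_powerset, Finset.insert_subset_iff, hkX, hA.1, hki]
          have hle := hAmax _ hmem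
          rw [Finset.card_insert_of_notMem hk.2] at hle
          omega
        have hXsub : X ⊆ Y.erase k :=
          fun x hx => Finset.mem_erase.mpr ⟨fun h => hkX (h ▸ hx), hXY hx⟩
        exact ih (Y.erase k).card
          (by rw [← hYn]; exact Finset.card_lt_card (Finset.erase_ssubset hk.1)) _ rfl hke X hXsub
  refine ⟨h0, fun X Y hXY hY => her Y.card Y rfl hY X hXY, fun X Y hX hY hc => ?_⟩
  obtain ⟨j, hj, hji, _⟩ := exch X Y hX hY hc
  exact ⟨j, hj, hji⟩
end

section
/- A set function f : 2^N → ℝ ∪ {-∞} is M-concave if and only if it satisfies the weak exchange property: for any distinct X, Y ∈ dom f, there exist i ∈ X \ Y and j ∈ Y \ X such that f(X) + f(Y) ≤ f((X\{i})∪{j}) + f((Y∪{i})\{j}). -/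
set_option linter.unusedSectionVars false
set_option linter.unusedVariables false
set_option maxHeartbeats 1000000

open Finset

namespace Stmt16Aux

variable {α : Type*} [DecidableEq α]

lemma ne_bot_of_le' {a b : WithBot ℝ} (h : a ≤ b) (ha : a ≠ ⊥) : b ≠ ⊥ :=
  fun hb => ha (le_bot_iff.mp (hb ▸ h))

lemma add_parts_ne_bot {a b : WithBot ℝ} (h : a + b ≠ ⊥) : a ≠ ⊥ ∧ b ≠ ⊥ := by
  rw [Ne, WithBot.add_eq_bot] at h; tauto

lemma toReal {a : WithBot ℝ} (h : a ≠ ⊥) : ∃ r : ℝ, a = ↑r := by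
  obtain ⟨r, hr⟩ := WithBot.ne_bot_iff_exists.mp h
  exact ⟨r, hr.symm⟩

lemma extract_sup {s : Finset α} {F : α → WithBot ℝ} {c : WithBot ℝ}
    (h : c ≤ s.sup F) (hc : c ≠ ⊥) : ∃ j ∈ s, c ≤ F j := by
  rcases s.eq_empty_or_nonempty with rfl | hs
  · rw [Finset.sup_empty] at h; exact absurd (le_bot_iff.mp h) hc
  · obtain ⟨j, hj, hsup⟩ := Finset.exists_mem_eq_sup s hs F
    exact ⟨j, hj, hsup ▸ h⟩

variable {X Y : Finset α} {i i1 a b j : α}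

lemma T1 (hj : j ∈ Y) :
    (insert j (X.erase i)) \ Y = (X \ Y).erase i := by
  ext x
  simp only [mem_sdiff, mem_insert, mem_erase]
  constructor
  · rintro ⟨h1 | ⟨h2, h3⟩, h4⟩
    · exact absurd (h1 ▸ hj) h4
    · exact ⟨h2, h3, h4⟩
  · rintro ⟨h1, h2, h3⟩; exact ⟨Or.inr ⟨h1, h2⟩, h3⟩

lemma T2 (hi : i ∉ Y) :
    Y \ (insert j (X.erase i)) = (Y \ X).erase j := by
  ext x
  simp only [mem_sdiff, mem_insert, mem_erase, not_or, not_and]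
  constructor
  · rintro ⟨h1, h2, h3⟩
    refine ⟨h2, h1, fun hx => ?_⟩
    rcases eq_or_ne x i with rfl | hne
    · exact hi h1
    · exact (h3 hne) hx
  · rintro ⟨h1, h2, h3⟩
    exact ⟨h2, h1, fun _ => h3⟩

lemma S1 (haX : a ∉ X) : X \ ((insert i1 Y).erase a) = (X \ Y).erase i1 := by
  ext x
  simp only [mem_sdiff, mem_erase, mem_insert, not_and, not_or]
  constructor
  · rintro ⟨h1, h2⟩
    have hxa : x ≠ a := fun h => haX (h ▸ h1)
    obtain ⟨h3, h4⟩ := h2 hxa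
    exact ⟨h3, h1, h4⟩
  · rintro ⟨h1, h2, h3⟩
    exact ⟨h2, fun _ => ⟨h1, h3⟩⟩

lemma S2 (ha : a ∈ Y) (hi1X : i1 ∈ X) :
    ((insert i1 Y).erase a) \ X = (Y \ X).erase a := by
  ext x
  simp only [mem_sdiff, mem_erase, mem_insert]
  constructor
  · rintro ⟨⟨h1, h2 | h2⟩, h3⟩
    · exact absurd (h2 ▸ hi1X) h3
    · exact ⟨h1, h2, h3⟩
  · rintro ⟨h1, h2, h3⟩
    exact ⟨⟨h1, Or.inr h2⟩, h3⟩

lemma S3 (hiY : i ∉ Y) (hi1Y : i1 ∉ Y) (hii1 : i ≠ i1) (ha : a ∈ Y) (hb : b ∈ Y) :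
    ((insert i ((insert i1 Y).erase a)).erase b) \ Y = {i, i1} := by
  have hib : i ≠ b := fun h => hiY (h ▸ hb)
  have hi1b : i1 ≠ b := fun h => hi1Y (h ▸ hb)
  have hi1a : i1 ≠ a := fun h => hi1Y (h ▸ ha)
  ext x
  simp only [mem_sdiff, mem_erase, mem_insert, mem_singleton]
  constructor
  · rintro ⟨⟨h1, h2 | ⟨h3, h4 | h4⟩⟩, h5⟩
    · exact Or.inl h2
    · exact Or.inr h4
    · exact absurd h4 h5
  · rintro (rfl | rfl)
    · exact ⟨⟨hib, Or.inl rfl⟩, hiY⟩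
    · exact ⟨⟨hi1b, Or.inr ⟨hi1a, Or.inl rfl⟩⟩, hi1Y⟩

lemma S4 (hiY : i ∉ Y) (hi1Y : i1 ∉ Y) (ha : a ∈ Y) (hb : b ∈ Y) :
    Y \ ((insert i ((insert i1 Y).erase a)).erase b) = {a, b} := by
  ext x
  simp only [mem_sdiff, mem_erase, mem_insert, mem_singleton, not_and, not_or]
  constructor
  · rintro ⟨h1, h2⟩
    by_cases hxb : x = b
    · exact Or.inr hxb
    · obtain ⟨h3, h4⟩ := h2 hxb
      by_cases hxa : x = a
      · exact Or.inl hxa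
      · exact absurd h1 ((h4 hxa).2)
  · rintro (rfl | rfl)
    · refine ⟨ha, fun h3 => ⟨fun h => hiY (h ▸ ha), fun h4 => absurd rfl h4⟩⟩
    · exact ⟨hb, fun h3 => absurd rfl h3⟩

lemma S5 (hiY : i ∉ Y) (hii1 : i ≠ i1) (hb : b ∈ Y) (hba : b ≠ a) :
    insert b (((insert i ((insert i1 Y).erase a)).erase b).erase i) = (insert i1 Y).erase a := by
  ext x
  simp only [mem_insert, mem_erase]
  constructor
  · rintro (rfl | ⟨h1, h2, (h3 | h3)⟩)
    · exact ⟨hba, Or.inr hb⟩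
    · exact absurd h3 h1
    · exact h3
  · rintro ⟨h1, h2⟩
    by_cases hxb : x = b
    · exact Or.inl hxb
    · have hxi : x ≠ i := by
        rcases h2 with rfl | h2
        · exact fun h => hii1 h.symm
        · exact fun h => hiY (h ▸ h2)
      exact Or.inr ⟨hxi, hxb, Or.inr ⟨h1, h2⟩⟩

lemma S6 (hiY : i ∉ Y) (hii1 : i ≠ i1) (ha : a ∈ Y) (hab : a ≠ b) :
    insert a (((insert i ((insert i1 Y).erase a)).erase b).erase i) = (insert i1 Y).erase b := by
  ext x
  simp only [mem_insert, mem_erase]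
  constructor
  · rintro (rfl | ⟨h1, h2, (h3 | h3)⟩)
    · exact ⟨hab, Or.inr ha⟩
    · exact absurd h3 h1
    · exact ⟨h2, h3.2⟩
  · rintro ⟨h1, h2⟩
    by_cases hxa : x = a
    · exact Or.inl hxa
    · have hxi : x ≠ i := by
        rcases h2 with rfl | h2
        · exact fun h => hii1 h.symm
        · exact fun h => hiY (h ▸ h2)
      exact Or.inr ⟨hxi, h1, Or.inr ⟨hxa, h2⟩⟩

lemma S7 (hia : i ≠ a) (hib : i ≠ b) :
    (insert i ((insert i1 Y).erase b)).erase a = (insert i ((insert i1 Y).erase a)).erase b := by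
  ext x
  simp only [mem_insert, mem_erase]
  constructor
  · rintro ⟨h1, rfl | ⟨h2, h3⟩⟩
    · exact ⟨hib, Or.inl rfl⟩
    · exact ⟨h2, Or.inr ⟨h1, h3⟩⟩
  · rintro ⟨h1, rfl | ⟨h2, h3⟩⟩
    · exact ⟨hia, Or.inl rfl⟩
    · exact ⟨h2, Or.inr ⟨h1, h3⟩⟩

lemma card_eq_of_weak (f : Finset α → WithBot ℝ)
    (Hw : ∀ X Y : Finset α, f X ≠ ⊥ → f Y ≠ ⊥ → X ≠ Y →
      ∃ i ∈ X \ Y, ∃ j ∈ Y \ X,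
        f X + f Y ≤ f (insert j (X.erase i)) + f ((insert i Y).erase j)) :
    ∀ X Y, f X ≠ ⊥ → f Y ≠ ⊥ → X.card = Y.card := by
  suffices h : ∀ k, ∀ X Y : Finset α, (X \ Y).card + (Y \ X).card ≤ k →
      f X ≠ ⊥ → f Y ≠ ⊥ → X.card = Y.card by
    intro X Y hX hY; exact h _ X Y le_rfl hX hY
  intro k
  induction k with
  | zero =>
    intro X Y h hX hY
    have h1 : X \ Y = ∅ := card_eq_zero.mp (by omega)
    have h2 : Y \ X = ∅ := card_eq_zero.mp (by omega)
    rw [Finset.Subset.antisymm (sdiff_eq_empty_iff_subset.mp h1)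
      (sdiff_eq_empty_iff_subset.mp h2)]
  | succ k ih =>
    intro X Y hk hX hY
    by_cases hXY : X = Y
    · rw [hXY]
    obtain ⟨i, hi, j, hj, hle⟩ := Hw X Y hX hY hXY
    have hi' := hi
    have hj' := hj
    rw [mem_sdiff] at hi' hj'
    have hne : f X + f Y ≠ ⊥ := by rw [Ne, WithBot.add_eq_bot]; tauto
    have h2 := add_parts_ne_bot (ne_bot_of_le' hle hne)
    have hcardX : (insert j (X.erase i)).card = X.card := by
      rw [card_insert_of_notMem (fun h => hj'.2 (mem_of_mem_erase h)), card_erase_of_mem hi'.1]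
      have : 1 ≤ X.card := card_pos.mpr ⟨i, hi'.1⟩
      omega
    have key := ih (insert j (X.erase i)) Y (by
      rw [T1 hj'.1, T2 hi'.2, card_erase_of_mem hi, card_erase_of_mem hj]
      have h3 : 1 ≤ (X \ Y).card := card_pos.mpr ⟨i, hi⟩
      have h4 : 1 ≤ (Y \ X).card := card_pos.mpr ⟨j, hj⟩
      omega) h2.1 hY
    omega

end Stmt16Aux

/-- M-concavity (valuated matroid) of a set function with values in ℝ ∪ {-∞}. -/
def MConcave {α : Type*} [DecidableEq α] (f : Finset α → WithBot ℝ) : Prop :=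
  ∀ X Y : Finset α, ∀ i ∈ X \ Y,
    f X + f Y ≤
      (Y \ X).sup fun j => f (insert j (X.erase i)) + f ((insert i Y).erase j)

namespace Stmt16Aux

lemma weak_to_mconcave {α : Type*} [DecidableEq α] (f : Finset α → WithBot ℝ)
    (Hw : ∀ X Y : Finset α, f X ≠ ⊥ → f Y ≠ ⊥ → X ≠ Y →
      ∃ i ∈ X \ Y, ∃ j ∈ Y \ X,
        f X + f Y ≤ f (insert j (X.erase i)) + f ((insert i Y).erase j)) :
    MConcave f := by
  have hcardf := card_eq_of_weak f Hw
  have key : ∀ n : ℕ, ∀ X Y : Finset α, (X \ Y).card ≤ n → f X ≠ ⊥ → f Y ≠ ⊥ →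
      ∀ i ∈ X \ Y, f X + f Y ≤
        (Y \ X).sup fun j => f (insert j (X.erase i)) + f ((insert i Y).erase j) := by
    intro n
    induction n with
    | zero =>
      intro X Y hn hX hY i hi
      have : X \ Y = ∅ := card_eq_zero.mp (Nat.le_antisymm hn (Nat.zero_le _))
      rw [this] at hi
      exact absurd hi (notMem_empty i)
    | succ n IH =>
      intro X Y hn hX hY i hi
      obtain ⟨hiX, hiY⟩ := mem_sdiff.mp hi
      have hXY : X ≠ Y := fun h => hiY (h ▸ hiX)
      obtain ⟨i1, hi1, j1, hj1, ineq1⟩ := Hw X Y hX hY hXY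
      obtain ⟨hi1X, hi1Y⟩ := mem_sdiff.mp hi1
      obtain ⟨hj1Y, hj1X⟩ := mem_sdiff.mp hj1
      by_cases hi1i : i1 = i
      · subst hi1i
        exact le_trans ineq1 (Finset.le_sup (f := fun j =>
          f (insert j (X.erase i1)) + f ((insert i1 Y).erase j)) hj1)
      have hii1 : i ≠ i1 := fun h => hi1i h.symm
      have hij1 : i ≠ j1 := fun h => hiY (h ▸ hj1Y)
      have hXYne : f X + f Y ≠ ⊥ := by rw [Ne, WithBot.add_eq_bot]; tauto
      obtain ⟨hX1ne, hY1ne⟩ := add_parts_ne_bot (ne_bot_of_le' ineq1 hXYne)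
      -- step0 : exchange on (X, Y+i1-j1) with i
      have hXmem : i ∈ X \ ((insert i1 Y).erase j1) := by
        rw [S1 hj1X]; exact mem_erase.mpr ⟨hii1, hi⟩
      have hcard1 : (X \ ((insert i1 Y).erase j1)).card ≤ n := by
        rw [S1 hj1X, card_erase_of_mem hi1]
        have : 1 ≤ (X \ Y).card := card_pos.mpr ⟨i, hi⟩
        omega
      have step0 := IH X ((insert i1 Y).erase j1) hcard1 hX hY1ne i hXmem
      have hXY1ne : f X + f ((insert i1 Y).erase j1) ≠ ⊥ := by
        rw [Ne, WithBot.add_eq_bot]; tauto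
      obtain ⟨j2, hj2mem, ineq0'⟩ := extract_sup step0 hXY1ne
      have ineq0 : f X + f ((insert i1 Y).erase j1) ≤
          f (insert j2 (X.erase i)) + f ((insert i ((insert i1 Y).erase j1)).erase j2) := ineq0'
      rw [S2 hj1Y hi1X] at hj2mem
      have hj2j1 : j2 ≠ j1 := (mem_erase.mp hj2mem).1
      have hj2 : j2 ∈ Y \ X := (mem_erase.mp hj2mem).2
      obtain ⟨hj2Y, hj2X⟩ := mem_sdiff.mp hj2
      by_cases hm2 : (X \ Y).card = 2
      · -- special case |X \ Y| = 2
        have hYX2 : (Y \ X).card = 2 := by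
          have c1 := Finset.card_sdiff_add_card_inter X Y
          have c2 := Finset.card_sdiff_add_card_inter Y X
          rw [inter_comm] at c2
          have := hcardf X Y hX hY
          omega
        have hXYeq : X \ Y = {i, i1} := by
          refine (Finset.eq_of_subset_of_card_le ?_ ?_).symm
          · intro x hx
            simp only [mem_insert, mem_singleton] at hx
            rcases hx with rfl | rfl
            · exact hi
            · exact hi1
          · rw [hm2, card_insert_of_notMem (by simp [hii1]), card_singleton]
        have hYXeq : Y \ X = {j1, j2} := by
          refine (Finset.eq_of_subset_of_card_le ?_ ?_).symm
          · intro x hx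
            simp only [mem_insert, mem_singleton] at hx
            rcases hx with rfl | rfl
            · exact hj1
            · exact hj2
          · rw [hYX2, card_insert_of_notMem (by
              simp only [mem_singleton]; exact fun h => hj2j1 h.symm), card_singleton]
        have hA : (insert i ((insert i1 Y).erase j1)).erase j2 = X := by
          ext x
          simp only [mem_insert, mem_erase]
          constructor
          · rintro ⟨h1, rfl | ⟨h2, rfl | h3⟩⟩
            · exact hiX
            · exact hi1X
            · by_contra hxX
              have hx : x ∈ Y \ X := mem_sdiff.mpr ⟨h3, hxX⟩
              rw [hYXeq] at hx
              simp only [mem_insert, mem_singleton] at hx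
              tauto
          · intro hxX
            have hxj2 : x ≠ j2 := fun h => hj2X (h ▸ hxX)
            have hxj1 : x ≠ j1 := fun h => hj1X (h ▸ hxX)
            refine ⟨hxj2, ?_⟩
            by_cases hxi : x = i
            · exact Or.inl hxi
            by_cases hxi1 : x = i1
            · exact Or.inr ⟨hxj1, Or.inl hxi1⟩
            have hxY : x ∈ Y := by
              by_contra hxY
              have hx : x ∈ X \ Y := mem_sdiff.mpr ⟨hxX, hxY⟩
              rw [hXYeq] at hx
              simp only [mem_insert, mem_singleton] at hx
              tauto
            exact Or.inr ⟨hxj1, Or.inr hxY⟩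
        have hB : insert j1 (X.erase i1) = (insert i Y).erase j2 := by
          ext x
          simp only [mem_insert, mem_erase]
          constructor
          · rintro (rfl | ⟨h1, h2⟩)
            · exact ⟨fun h => hj2j1 h.symm, Or.inr hj1Y⟩
            · have hxj2 : x ≠ j2 := fun h => hj2X (h ▸ h2)
              refine ⟨hxj2, ?_⟩
              by_cases hxi : x = i
              · exact Or.inl hxi
              have hxY : x ∈ Y := by
                by_contra hxY
                have hx : x ∈ X \ Y := mem_sdiff.mpr ⟨h2, hxY⟩
                rw [hXYeq] at hx
                simp only [mem_insert, mem_singleton] at hx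
                tauto
              exact Or.inr hxY
          · rintro ⟨h1, rfl | h2⟩
            · exact Or.inr ⟨hii1, hiX⟩
            · by_cases hxj1 : x = j1
              · exact Or.inl hxj1
              have hxX : x ∈ X := by
                by_contra hxX
                have hx : x ∈ Y \ X := mem_sdiff.mpr ⟨h2, hxX⟩
                rw [hYXeq] at hx
                simp only [mem_insert, mem_singleton] at hx
                tauto
              exact Or.inr ⟨fun h => hi1Y (h ▸ h2), hxX⟩
        rw [hA] at ineq0
        -- ineq0 : f X + f Y1 ≤ f (insert j2 (X.erase i)) + f X
        have hZne : f (insert j2 (X.erase i)) ≠ ⊥ :=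
          (add_parts_ne_bot (ne_bot_of_le' ineq0 hXY1ne)).1
        obtain ⟨x, hx⟩ := toReal hX
        obtain ⟨y, hy⟩ := toReal hY
        obtain ⟨x1, hx1⟩ := toReal hX1ne
        obtain ⟨p, hp⟩ := toReal hY1ne
        obtain ⟨z, hz⟩ := toReal hZne
        refine le_trans ?_ (Finset.le_sup (f := fun j =>
          f (insert j (X.erase i)) + f ((insert i Y).erase j)) hj2)
        show f X + f Y ≤ f (insert j2 (X.erase i)) + f ((insert i Y).erase j2)
        rw [← hB]
        rw [hx, hy, hx1, hp] at ineq1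
        rw [hx, hp, hz] at ineq0
        rw [hx, hy, hz, hx1]
        have r1 : x + y ≤ x1 + p := by exact_mod_cast ineq1
        have r0 : x + p ≤ z + x := by exact_mod_cast ineq0
        have : x + y ≤ z + x1 := by linarith
        exact_mod_cast this
      · -- general case |X \ Y| ≥ 3
        have h2le : 2 ≤ (X \ Y).card := by
          have hsub : ({i, i1} : Finset α) ⊆ X \ Y := by
            intro x hx
            simp only [mem_insert, mem_singleton] at hx
            rcases hx with rfl | rfl
            · exact hi
            · exact hi1
          calc 2 = ({i, i1} : Finset α).card := by
                rw [card_insert_of_notMem (by simp [hii1]), card_singleton]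
            _ ≤ (X \ Y).card := card_le_card hsub
        have hn2 : 2 ≤ n := by omega
        -- the transition step
        have trans : ∀ a b : α, a ∈ Y \ X → b ∈ Y \ X → a ≠ b →
            f ((insert i1 Y).erase a) ≠ ⊥ →
            f X + f ((insert i1 Y).erase a) ≤
              f (insert b (X.erase i)) + f ((insert i ((insert i1 Y).erase a)).erase b) →
            (f X + f Y ≤ (Y \ X).sup fun j =>
              f (insert j (X.erase i)) + f ((insert i Y).erase j)) ∨
            ∃ c ∈ Y \ X, c ≠ b ∧ f ((insert i1 Y).erase b) ≠ ⊥ ∧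
              (f X + f ((insert i1 Y).erase b) ≤
                f (insert c (X.erase i)) + f ((insert i ((insert i1 Y).erase b)).erase c)) ∧
              f ((insert i1 Y).erase a) + f (insert a (X.erase i)) <
                f ((insert i1 Y).erase b) + f (insert b (X.erase i)) := by
          intro a b ha hb hab hYa hC
          obtain ⟨haY, haX⟩ := mem_sdiff.mp ha
          obtain ⟨hbY, hbX⟩ := mem_sdiff.mp hb
          have hia : i ≠ a := fun h => hiY (h ▸ haY)
          have hib : i ≠ b := fun h => hiY (h ▸ hbY)
          have hXYane : f X + f ((insert i1 Y).erase a) ≠ ⊥ := by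
            rw [Ne, WithBot.add_eq_bot]; tauto
          obtain ⟨hXbne, hWabne⟩ := add_parts_ne_bot (ne_bot_of_le' hC hXYane)
          have hWY : ((insert i ((insert i1 Y).erase a)).erase b) \ Y = {i, i1} :=
            S3 hiY hi1Y hii1 haY hbY
          have hWmem : i ∈ ((insert i ((insert i1 Y).erase a)).erase b) \ Y := by
            rw [hWY]; simp
          have hWcard : (((insert i ((insert i1 Y).erase a)).erase b) \ Y).card ≤ n := by
            rw [hWY, card_insert_of_notMem (by simp [hii1]), card_singleton]
            omega
          have step1 := IH _ Y hWcard hWabne hY i hWmem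
          have hWYne : f ((insert i ((insert i1 Y).erase a)).erase b) + f Y ≠ ⊥ := by
            rw [Ne, WithBot.add_eq_bot]; tauto
          obtain ⟨k, hk, ineqk'⟩ := extract_sup step1 hWYne
          have ineqk : f ((insert i ((insert i1 Y).erase a)).erase b) + f Y ≤
              f (insert k ((((insert i ((insert i1 Y).erase a)).erase b)).erase i)) +
                f ((insert i Y).erase k) := ineqk'
          rw [S4 hiY hi1Y haY hbY] at hk
          simp only [mem_insert, mem_singleton] at hk
          rcases hk with hk | hk
          · -- k = a
            rw [hk] at ineqk
            rw [S6 hiY hii1 haY hab] at ineqk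
            -- ineqk : f Wab + f Y ≤ f ((insert i1 Y).erase b) + f ((insert i Y).erase a)
            obtain ⟨hYbne, hQane⟩ := add_parts_ne_bot (ne_bot_of_le' ineqk hWYne)
            have hXYbcard : (X \ ((insert i1 Y).erase b)).card ≤ n := by
              rw [S1 hbX, card_erase_of_mem hi1]
              omega
            have hXmem2 : i ∈ X \ ((insert i1 Y).erase b) := by
              rw [S1 hbX]; exact mem_erase.mpr ⟨hii1, hi⟩
            have step2 := IH X ((insert i1 Y).erase b) hXYbcard hX hYbne i hXmem2
            have hXYbne : f X + f ((insert i1 Y).erase b) ≠ ⊥ := by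
              rw [Ne, WithBot.add_eq_bot]; tauto
            obtain ⟨c, hc, ineqc'⟩ := extract_sup step2 hXYbne
            have ineqc : f X + f ((insert i1 Y).erase b) ≤
                f (insert c (X.erase i)) + f ((insert i ((insert i1 Y).erase b)).erase c) :=
              ineqc'
            rw [S2 hbY hi1X] at hc
            have hcb : c ≠ b := (mem_erase.mp hc).1
            have hcYX : c ∈ Y \ X := (mem_erase.mp hc).2
            by_cases hca : c = a
            · subst hca
              rw [S7 hia hib] at ineqc
              -- ineqc : f X + f Yb ≤ f (insert c (X.erase i)) + f Wab
              left
              refine le_trans ?_ (Finset.le_sup (f := fun j =>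
                f (insert j (X.erase i)) + f ((insert i Y).erase j)) ha)
              show f X + f Y ≤ f (insert c (X.erase i)) + f ((insert i Y).erase c)
              have hvne : f (insert c (X.erase i)) ≠ ⊥ :=
                (add_parts_ne_bot (ne_bot_of_le' ineqc hXYbne)).1
              obtain ⟨x, hx⟩ := toReal hX
              obtain ⟨y, hy⟩ := toReal hY
              obtain ⟨w, hw⟩ := toReal hWabne
              obtain ⟨r, hr⟩ := toReal hYbne
              obtain ⟨u, hu⟩ := toReal hQane
              obtain ⟨v, hv⟩ := toReal hvne
              rw [hx, hr, hv, hw] at ineqc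
              rw [hw, hy, hr, hu] at ineqk
              rw [hx, hy, hv, hu]
              have r1 : x + r ≤ v + w := by exact_mod_cast ineqc
              have r2 : w + y ≤ r + u := by exact_mod_cast ineqk
              have : x + y ≤ v + u := by linarith
              exact_mod_cast this
            · by_cases hga : f X + f Y ≤
                  f (insert a (X.erase i)) + f ((insert i Y).erase a)
              · exact Or.inl (le_trans hga (Finset.le_sup (f := fun j =>
                  f (insert j (X.erase i)) + f ((insert i Y).erase j)) ha))
              · right
                refine ⟨c, hcYX, hcb, hYbne, ineqc, ?_⟩
                obtain ⟨x, hx⟩ := toReal hX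
                obtain ⟨y, hy⟩ := toReal hY
                obtain ⟨p, hp⟩ := toReal hYa
                obtain ⟨q, hq⟩ := toReal hXbne
                obtain ⟨w, hw⟩ := toReal hWabne
                obtain ⟨r, hr⟩ := toReal hYbne
                obtain ⟨u, hu⟩ := toReal hQane
                rcases eq_or_ne (f (insert a (X.erase i))) ⊥ with hv | hv
                · rw [hv, hp, hr, hq, WithBot.add_bot, ← WithBot.coe_add]
                  exact WithBot.bot_lt_coe _
                · obtain ⟨v, hv'⟩ := toReal hv
                  rw [hx, hp, hq, hw] at hC
                  rw [hw, hy, hr, hu] at ineqk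
                  rw [hx, hy, hv', hu] at hga
                  rw [hp, hv', hr, hq]
                  have r1 : x + p ≤ q + w := by exact_mod_cast hC
                  have r2 : w + y ≤ r + u := by exact_mod_cast ineqk
                  have r3 : ¬(x + y ≤ v + u) := by
                    intro h; exact hga (by exact_mod_cast h)
                  have : p + v < r + q := by linarith [not_le.mp r3]
                  exact_mod_cast this
          · -- k = b
            rw [hk] at ineqk
            rw [S5 hiY hii1 hbY (fun h => hab h.symm)] at ineqk
            -- ineqk : f Wab + f Y ≤ f ((insert i1 Y).erase a) + f ((insert i Y).erase b)
            obtain ⟨hYane2, hQbne⟩ := add_parts_ne_bot (ne_bot_of_le' ineqk hWYne)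
            left
            refine le_trans ?_ (Finset.le_sup (f := fun j =>
              f (insert j (X.erase i)) + f ((insert i Y).erase j)) hb)
            show f X + f Y ≤ f (insert b (X.erase i)) + f ((insert i Y).erase b)
            obtain ⟨x, hx⟩ := toReal hX
            obtain ⟨y, hy⟩ := toReal hY
            obtain ⟨p, hp⟩ := toReal hYa
            obtain ⟨q, hq⟩ := toReal hXbne
            obtain ⟨w, hw⟩ := toReal hWabne
            obtain ⟨u, hu⟩ := toReal hQbne
            rw [hx, hp, hq, hw] at hC
            rw [hw, hy, hp, hu] at ineqk
            rw [hx, hy, hq, hu]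
            have r1 : x + p ≤ q + w := by exact_mod_cast hC
            have r2 : w + y ≤ p + u := by exact_mod_cast ineqk
            have : x + y ≤ q + u := by linarith
            exact_mod_cast this
        -- inner induction on the ψ-filter cardinality
        have inner : ∀ t : ℕ, ∀ a b : α, a ∈ Y \ X → b ∈ Y \ X → a ≠ b →
            f ((insert i1 Y).erase a) ≠ ⊥ →
            (f X + f ((insert i1 Y).erase a) ≤
              f (insert b (X.erase i)) + f ((insert i ((insert i1 Y).erase a)).erase b)) →
            (((Y \ X).filter (fun z => f ((insert i1 Y).erase a) + f (insert a (X.erase i)) <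
                f ((insert i1 Y).erase z) + f (insert z (X.erase i)))).card ≤ t) →
            f X + f Y ≤ (Y \ X).sup fun j =>
              f (insert j (X.erase i)) + f ((insert i Y).erase j) := by
          intro t
          induction t with
          | zero =>
            intro a b ha hb hab hYa hC hfil
            rcases trans a b ha hb hab hYa hC with h | ⟨c, hc, hcb, hYb, hCbc, hlt⟩
            · exact h
            · exfalso
              have hbmem : b ∈ (Y \ X).filter (fun z =>
                  f ((insert i1 Y).erase a) + f (insert a (X.erase i)) <
                    f ((insert i1 Y).erase z) + f (insert z (X.erase i))) :=
                mem_filter.mpr ⟨hb, hlt⟩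
              have := card_pos.mpr ⟨b, hbmem⟩
              omega
          | succ t iht =>
            intro a b ha hb hab hYa hC hfil
            rcases trans a b ha hb hab hYa hC with h | ⟨c, hc, hcb, hYb, hCbc, hlt⟩
            · exact h
            · refine iht b c hb hc (fun h => hcb h.symm) hYb hCbc ?_
              have hbmem : b ∈ (Y \ X).filter (fun z =>
                  f ((insert i1 Y).erase a) + f (insert a (X.erase i)) <
                    f ((insert i1 Y).erase z) + f (insert z (X.erase i))) :=
                mem_filter.mpr ⟨hb, hlt⟩
              have hsubs : (Y \ X).filter (fun z =>
                  f ((insert i1 Y).erase b) + f (insert b (X.erase i)) <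
                    f ((insert i1 Y).erase z) + f (insert z (X.erase i))) ⊆
                  ((Y \ X).filter (fun z =>
                  f ((insert i1 Y).erase a) + f (insert a (X.erase i)) <
                    f ((insert i1 Y).erase z) + f (insert z (X.erase i)))).erase b := by
                intro z hz
                rw [mem_filter] at hz
                refine mem_erase.mpr ⟨fun h => absurd (h ▸ hz.2) (lt_irrefl _), ?_⟩
                exact mem_filter.mpr ⟨hz.1, lt_trans hlt hz.2⟩
              have h1 := card_le_card hsubs
              rw [card_erase_of_mem hbmem] at h1
              have h2 := card_pos.mpr ⟨b, hbmem⟩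
              omega
        exact inner ((Y \ X).card) j1 j2 hj1 hj2 (fun h => hj2j1 h.symm) hY1ne ineq0
          (card_le_card (filter_subset _ _))
  intro X Y i hi
  by_cases hX : f X = ⊥
  · rw [hX, WithBot.bot_add]; exact bot_le
  by_cases hY : f Y = ⊥
  · rw [hY, WithBot.add_bot]; exact bot_le
  exact key ((X \ Y).card) X Y le_rfl hX hY i hi

end Stmt16Aux

theorem stmt_16 {α : Type*} [Fintype α] [DecidableEq α] (f : Finset α → WithBot ℝ)
    (hne : ∃ X, f X ≠ ⊥) :
    MConcave f ↔
      ∀ X Y : Finset α, f X ≠ ⊥ → f Y ≠ ⊥ → X ≠ Y →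
        ∃ i ∈ X \ Y, ∃ j ∈ Y \ X,
          f X + f Y ≤ f (insert j (X.erase i)) + f ((insert i Y).erase j) := by
  constructor
  · intro hM X Y hX hY hXY
    have hXd : (X \ Y).Nonempty := by
      rw [Finset.sdiff_nonempty]
      intro hsub
      have hYd : (Y \ X).Nonempty := by
        rw [Finset.sdiff_nonempty]
        intro h2
        exact hXY (Finset.Subset.antisymm hsub h2)
      obtain ⟨i', hi'⟩ := hYd
      have h := hM Y X i' hi'
      have he : X \ Y = ∅ := Finset.sdiff_eq_empty_iff_subset.mpr hsub
      rw [he, Finset.sup_empty] at h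
      have hne' : f Y + f X ≠ ⊥ := by rw [Ne, WithBot.add_eq_bot]; tauto
      exact hne' (le_bot_iff.mp h)
    obtain ⟨i, hi⟩ := hXd
    have h := hM X Y i hi
    obtain ⟨j, hj, hle⟩ := Stmt16Aux.extract_sup h
      (by rw [Ne, WithBot.add_eq_bot]; tauto)
    exact ⟨i, hi, j, hj, hle⟩
  · intro Hw
    exact Stmt16Aux.weak_to_mconcave f Hw
end
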